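/- Assume: Ω and A are finite sets; u, v: A × Ω → [0,1]; μ̂ ∈ Δ(Ω) with min_{ω∈Ω} μ̂(ω) ≥ p0 > 0; there exists D > 0 such that for every action a ∈ A there is a belief η_a ∈ Δ(Ω) with Σ_ω η_a(ω) v(a,ω) ≥ Σ_ω η_a(ω) v(a',ω) + D for every a' ≠ a; 0 < ε ≤ p0²D/2; and μ* ∈ Δ(Ω) with ‖μ* − μ̂‖₁ ≤ ε. Suppose π̂ is a direct signaling scheme that is persuasive for μ̂ and maximizes U(μ̂, ·) among all direct signaling schemes persuasive for μ̂. Then there exists a direct signaling scheme π̃ that is persuasive for μ* and satisfies U(μ*, π̃) ≥ U(μ*, π) − 14ε/(p0²D) for every direct signaling scheme π that is persuasive for μ*. -/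

import Mathlib

open Finset

/-- A direct signaling scheme: every row `π ω ·` is a probability distribution on actions. -/
def IsSignalScheme {Ω A : Type*} [Fintype A] (π : Ω → A → ℝ) : Prop :=
  (∀ ω a, 0 ≤ π ω a) ∧ ∀ ω, ∑ a, π ω a = 1

/-- A direct signaling scheme `π` is persuasive for prior `μ`. -/
def IsPersuasive {Ω A : Type*} [Fintype Ω] (v : A → Ω → ℝ) (μ : Ω → ℝ)
    (π : Ω → A → ℝ) : Prop :=
  ∀ a a' : A, 0 ≤ ∑ ω, μ ω * π ω a * (v a ω - v a' ω)

/-- The designer's (obedient) expected utility. -/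
def designerU {Ω A : Type*} [Fintype Ω] [Fintype A] (u : A → Ω → ℝ) (μ : Ω → ℝ)
    (π : Ω → A → ℝ) : ℝ :=
  ∑ ω, μ ω * ∑ a, π ω a * u a ω

/-!
Keep `(1 - γ) π` of a scheme `π` persuasive for `μ` and, for each action `a`, add joint mass
proportional to a belief `η a` at which `a` beats every other action by `D`, scaled to restore
exactly the obedience that `a` can lose when the prior moves from `μ` to `ν`; the leftover
probability at each state goes to a best response. If `‖ν - μ‖₁ ≤ ε` and `ν ≥ q`, this scheme is
persuasive for `ν` and loses at most `γ = ε / (q D)` of the designer's utility. Robustifying `π̂`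
from `μ̂` to `μ*`, and any competitor back from `μ*` to `μ̂`, then comparing through the
optimality of `π̂` and `|U(μ, π) - U(ν, π)| ≤ ‖μ - ν‖₁`, bounds the total loss by `2γ + 2ε`.
-/

lemma sum_mul_mem_Icc {ι : Type*} [Fintype ι] {w f : ι → ℝ} (hw0 : ∀ i, 0 ≤ w i)
    (hw1 : ∑ i, w i = 1) (hf : ∀ i, f i ∈ Set.Icc (0 : ℝ) 1) :
    ∑ i, w i * f i ∈ Set.Icc (0 : ℝ) 1 :=
  (convex_Icc 0 1).sum_mem (fun i _ => hw0 i) hw1 fun i _ => hf i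

lemma le_one_of_forall_le_of_sum_eq_one {ι : Type*} [Fintype ι] {w : ι → ℝ} {p : ℝ}
    (hp : 0 ≤ p) (hw : ∀ i, p ≤ w i) (hw1 : ∑ i, w i = 1) : p ≤ 1 := by
  obtain ⟨i, -⟩ := nonempty_of_sum_ne_zero (hw1.trans_ne one_ne_zero)
  exact (hw i).trans (hw1 ▸ single_le_sum (fun j _ => hp.trans (hw j)) (mem_univ i))

lemma sub_le_of_sum_abs_sub_le {ι : Type*} [Fintype ι] {w w' : ι → ℝ} {p ε : ℝ}
    (hw : ∀ i, p ≤ w i) (hclose : ∑ i, |w' i - w i| ≤ ε) (i : ι) : p - ε ≤ w' i := by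
  have := abs_le.1 ((single_le_sum (fun j _ => abs_nonneg (w' j - w j)) (mem_univ i)).trans hclose)
  linarith [hw i]

lemma two_mul_div_add_two_mul_le {p D ε : ℝ} (hp0 : 0 < p) (hp1 : p ≤ 1) (hD : 0 < D)
    (hD1 : D ≤ 1) (hε0 : 0 ≤ ε) :
    2 * (ε / (p / 2 * D)) + 2 * ε ≤ 14 * ε / (p ^ 2 * D) := by
  have hfactor : ε / (p / 2 * D) * (p ^ 2 * D) = 2 * ε * p := by field_simp
  rw [le_div_iff₀ (by positivity), add_mul, mul_assoc, hfactor]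
  nlinarith [mul_le_mul_of_nonneg_left hp1 hε0, mul_le_mul_of_nonneg_left hD1 (sq_nonneg p)]

lemma margin_le_one {Ω A : Type*} [Fintype Ω] {v : A → Ω → ℝ} {D : ℝ}
    (hv : ∀ a ω, v a ω ∈ Set.Icc (0 : ℝ) 1) {η : Ω → ℝ} (hη0 : ∀ ω, 0 ≤ η ω)
    (hη1 : ∑ ω, η ω = 1) {a a' : A}
    (hmargin : (∑ ω, η ω * v a' ω) + D ≤ ∑ ω, η ω * v a ω) : D ≤ 1 := by
  have ha := sum_mul_mem_Icc hη0 hη1 fun ω => hv a ω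
  have ha' := sum_mul_mem_Icc hη0 hη1 fun ω => hv a' ω
  linarith [ha.2, ha'.1]

section Robustification

variable {Ω A : Type*}
  {u v : A → Ω → ℝ} {μ ν : Ω → ℝ} {π : Ω → A → ℝ} {D γ : ℝ} {η : A → Ω → ℝ} {b : Ω → A}

lemma IsSignalScheme.sum_mul_mem_Icc [Fintype A] (hπ : IsSignalScheme π)
    (hu : ∀ a ω, u a ω ∈ Set.Icc (0 : ℝ) 1) (ω : Ω) :
    ∑ a, π ω a * u a ω ∈ Set.Icc (0 : ℝ) 1 :=
  _root_.sum_mul_mem_Icc (hπ.1 ω) (hπ.2 ω) fun a => hu a ω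

lemma isPersuasive_of_subsingleton [Fintype Ω] [Subsingleton A] : IsPersuasive v μ π := by
  intro a a'
  simp [Subsingleton.elim a a']

variable [Fintype Ω] [Fintype A]

lemma designerU_le_one (hu : ∀ a ω, u a ω ∈ Set.Icc (0 : ℝ) 1) (hμ0 : ∀ ω, 0 ≤ μ ω)
    (hμ1 : ∑ ω, μ ω = 1) (hπ : IsSignalScheme π) : designerU u μ π ≤ 1 :=
  (sum_mul_mem_Icc hμ0 hμ1 (hπ.sum_mul_mem_Icc hu)).2

lemma abs_designerU_sub_le (hu : ∀ a ω, u a ω ∈ Set.Icc (0 : ℝ) 1) (hπ : IsSignalScheme π) :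
    |designerU u μ π - designerU u ν π| ≤ ∑ ω, |μ ω - ν ω| := by
  rw [designerU, designerU, ← sum_sub_distrib]
  refine (abs_sum_le_sum_abs _ _).trans (sum_le_sum fun ω _ => ?_)
  obtain ⟨h0, h1⟩ := hπ.sum_mul_mem_Icc hu ω
  rw [← sub_mul, abs_mul, abs_of_nonneg h0]
  exact mul_le_of_le_one_right (abs_nonneg _) h1

lemma designerU_mono (hu0 : ∀ a ω, 0 ≤ u a ω) (hμ0 : ∀ ω, 0 ≤ μ ω) {π' : Ω → A → ℝ}
    (h : ∀ ω a, π ω a ≤ π' ω a) : designerU u μ π ≤ designerU u μ π' :=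
  sum_le_sum fun ω _ => mul_le_mul_of_nonneg_left
    (sum_le_sum fun a _ => mul_le_mul_of_nonneg_right (h ω a) (hu0 a ω)) (hμ0 ω)

lemma designerU_const_mul (c : ℝ) :
    designerU u μ (fun ω a => c * π ω a) = c * designerU u μ π := by
  simp only [designerU, mul_sum, mul_assoc, mul_left_comm]

lemma designerU_eq_of_subsingleton [Subsingleton A] {π' : Ω → A → ℝ} (hπ : IsSignalScheme π)
    (hπ' : IsSignalScheme π') : designerU u μ π = designerU u μ π' := by
  have hrow : ∀ {ρ : Ω → A → ℝ}, IsSignalScheme ρ → ∀ ω a, ρ ω a = 1 := fun hρ ω a => by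
    rw [← hρ.2 ω, Fintype.sum_subsingleton _ a]
  simp only [designerU, hrow hπ, hrow hπ']

/-- The amount by which the obedience constraints of `a` can deteriorate when the prior moves
from `μ` to `ν`. -/
def obedienceLoss (μ ν : Ω → ℝ) (π : Ω → A → ℝ) (a : A) : ℝ :=
  ∑ ω, |ν ω - μ ω| * π ω a

lemma obedienceLoss_nonneg (hπ : IsSignalScheme π) (a : A) : 0 ≤ obedienceLoss μ ν π a :=
  sum_nonneg fun ω _ => mul_nonneg (abs_nonneg _) (hπ.1 ω a)

lemma sum_obedienceLoss (hπ : IsSignalScheme π) :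
    ∑ a, obedienceLoss μ ν π a = ∑ ω, |ν ω - μ ω| := by
  simp only [obedienceLoss]
  rw [sum_comm]
  exact sum_congr rfl fun ω _ => by rw [← mul_sum, hπ.2 ω, mul_one]

lemma sub_obedienceLoss_le (hv : ∀ a ω, v a ω ∈ Set.Icc (0 : ℝ) 1) (hπ : IsSignalScheme π)
    (a a' : A) :
    ∑ ω, μ ω * π ω a * (v a ω - v a' ω) - obedienceLoss μ ν π a ≤
      ∑ ω, ν ω * π ω a * (v a ω - v a' ω) := by
  rw [obedienceLoss, ← sum_sub_distrib]
  refine sum_le_sum fun ω _ => ?_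
  have hgap : |v a ω - v a' ω| ≤ 1 :=
    abs_sub_le_iff.2 ⟨by linarith [(hv a ω).2, (hv a' ω).1], by linarith [(hv a ω).1, (hv a' ω).2]⟩
  have hdiff : |(ν ω - μ ω) * (π ω a * (v a ω - v a' ω))| ≤ |ν ω - μ ω| * π ω a := by
    rw [abs_mul, abs_mul, abs_of_nonneg (hπ.1 ω a)]
    gcongr
    exact mul_le_of_le_one_right (hπ.1 ω a) hgap
  linarith [neg_abs_le ((ν ω - μ ω) * (π ω a * (v a ω - v a' ω)))]

/-- Conditional probability of `a` at `ω` that adds joint mass `obedienceLoss μ ν π a / D • η a`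
to the column of `a`. -/
noncomputable def boost (μ ν : Ω → ℝ) (D : ℝ) (η : A → Ω → ℝ) (π : Ω → A → ℝ)
    (ω : Ω) (a : A) : ℝ :=
  obedienceLoss μ ν π a / D * η a ω / ν ω

lemma boost_nonneg (hD : 0 ≤ D) (hη0 : ∀ a ω, 0 ≤ η a ω) (hν : ∀ ω, 0 ≤ ν ω)
    (hπ : IsSignalScheme π) (ω : Ω) (a : A) : 0 ≤ boost μ ν D η π ω a :=
  div_nonneg (mul_nonneg (div_nonneg (obedienceLoss_nonneg hπ a) hD) (hη0 a ω)) (hν ω)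

lemma sum_boost_le (hD : 0 < D) (hη0 : ∀ a ω, 0 ≤ η a ω) (hη1 : ∀ a, ∑ ω, η a ω = 1)
    (hν : ∀ ω, 0 < ν ω) (hbudget : ∀ ω, ∑ ω', |ν ω' - μ ω'| ≤ γ * D * ν ω)
    (hπ : IsSignalScheme π) (ω : Ω) : ∑ a, boost μ ν D η π ω a ≤ γ := by
  have hη_le : ∀ a, η a ω ≤ 1 := fun a =>
    hη1 a ▸ single_le_sum (fun ω' _ => hη0 a ω') (mem_univ ω)
  calc ∑ a, boost μ ν D η π ω a
      ≤ ∑ a, obedienceLoss μ ν π a / D / ν ω := by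
        refine sum_le_sum fun a _ => div_le_div_of_nonneg_right ?_ (hν ω).le
        exact mul_le_of_le_one_right (div_nonneg (obedienceLoss_nonneg hπ a) hD.le) (hη_le a)
    _ = (∑ ω', |ν ω' - μ ω'|) / (D * ν ω) := by
        rw [← sum_div, ← sum_div, sum_obedienceLoss hπ, div_div]
    _ ≤ γ := by
        rw [div_le_iff₀ (mul_pos hD (hν ω)), ← mul_assoc]
        exact hbudget ω

section Construction

variable [DecidableEq A]

noncomputable def robustify (μ ν : Ω → ℝ) (D γ : ℝ) (η : A → Ω → ℝ) (b : Ω → A)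
    (π : Ω → A → ℝ) : Ω → A → ℝ := fun ω a =>
  (1 - γ) * π ω a + boost μ ν D η π ω a +
    (γ - ∑ a', boost μ ν D η π ω a') * if a = b ω then 1 else 0

lemma le_robustify (hD : 0 < D) (hη0 : ∀ a ω, 0 ≤ η a ω) (hη1 : ∀ a, ∑ ω, η a ω = 1)
    (hν : ∀ ω, 0 < ν ω) (hbudget : ∀ ω, ∑ ω', |ν ω' - μ ω'| ≤ γ * D * ν ω)
    (hπ : IsSignalScheme π) (ω : Ω) (a : A) :
    (1 - γ) * π ω a ≤ robustify μ ν D γ η b π ω a := by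
  have hrest : 0 ≤ γ - ∑ a', boost μ ν D η π ω a' :=
    sub_nonneg.2 (sum_boost_le hD hη0 hη1 hν hbudget hπ ω)
  have hb : (0 : ℝ) ≤ if a = b ω then 1 else 0 := by split_ifs <;> norm_num
  have hboost := boost_nonneg hD.le hη0 (fun ω => (hν ω).le) hπ ω a (μ := μ)
  unfold robustify
  nlinarith [mul_nonneg hrest hb]

lemma robustify_isSignalScheme (hD : 0 < D) (hη0 : ∀ a ω, 0 ≤ η a ω)
    (hη1 : ∀ a, ∑ ω, η a ω = 1) (hν : ∀ ω, 0 < ν ω) (hγ1 : γ ≤ 1)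
    (hbudget : ∀ ω, ∑ ω', |ν ω' - μ ω'| ≤ γ * D * ν ω) (hπ : IsSignalScheme π) :
    IsSignalScheme (robustify μ ν D γ η b π) := by
  refine ⟨fun ω a => ?_, fun ω => ?_⟩
  · exact (mul_nonneg (sub_nonneg.2 hγ1) (hπ.1 ω a)).trans
      (le_robustify hD hη0 hη1 hν hbudget hπ ω a)
  · simp only [robustify, sum_add_distrib, ← mul_sum, hπ.2 ω, sum_ite_eq', mem_univ, if_true]
    ring

lemma isPersuasive_robustify (hv : ∀ a ω, v a ω ∈ Set.Icc (0 : ℝ) 1) (hD : 0 < D)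
    (hη0 : ∀ a ω, 0 ≤ η a ω) (hη1 : ∀ a, ∑ ω, η a ω = 1)
    (hmargin : ∀ a a', a' ≠ a → (∑ ω, η a ω * v a' ω) + D ≤ ∑ ω, η a ω * v a ω)
    (hb : ∀ ω a, v a ω ≤ v (b ω) ω) (hν : ∀ ω, 0 < ν ω) (hγ0 : 0 ≤ γ) (hγ1 : γ ≤ 1)
    (hbudget : ∀ ω, ∑ ω', |ν ω' - μ ω'| ≤ γ * D * ν ω) (hπ : IsSignalScheme π)
    (hpers : IsPersuasive v μ π) : IsPersuasive v ν (robustify μ ν D γ η b π) := by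
  intro a a'
  obtain rfl | hne := eq_or_ne a a'
  · simp
  set L := obedienceLoss μ ν π a
  set r : Ω → ℝ := fun ω => γ - ∑ a'', boost μ ν D η π ω a''
  have hsplit : ∀ ω, ν ω * robustify μ ν D γ η b π ω a * (v a ω - v a' ω) =
      (1 - γ) * (ν ω * π ω a * (v a ω - v a' ω)) + L / D * (η a ω * (v a ω - v a' ω)) +
        ν ω * r ω * (if a = b ω then 1 else 0) * (v a ω - v a' ω) := fun ω => by
    simp only [robustify, boost, r, L]
    field_simp [(hν ω).ne']
  rw [sum_congr rfl fun ω _ => hsplit ω, sum_add_distrib, sum_add_distrib, ← mul_sum,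
    ← mul_sum]
  have hold : -L ≤ ∑ ω, ν ω * π ω a * (v a ω - v a' ω) := by
    linarith [sub_obedienceLoss_le hv hπ a a' (μ := μ) (ν := ν), hpers a a']
  have hgain : L ≤ L / D * ∑ ω, η a ω * (v a ω - v a' ω) := by
    have hD_le : D ≤ ∑ ω, η a ω * (v a ω - v a' ω) := by
      simp only [mul_sub, sum_sub_distrib]
      linarith [hmargin a a' hne.symm]
    calc L = L / D * D := (div_mul_cancel₀ L hD.ne').symm
      _ ≤ _ := mul_le_mul_of_nonneg_left hD_le (div_nonneg (obedienceLoss_nonneg hπ a) hD.le)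
  have hbest : 0 ≤ ∑ ω, ν ω * r ω * (if a = b ω then 1 else 0) * (v a ω - v a' ω) := by
    refine sum_nonneg fun ω _ => ?_
    have hr : 0 ≤ r ω := sub_nonneg.2 (sum_boost_le hD hη0 hη1 hν hbudget hπ ω)
    split_ifs with hab
    · subst hab
      exact mul_nonneg (mul_nonneg (mul_nonneg (hν ω).le hr) zero_le_one) (sub_nonneg.2 (hb ω a'))
    · simp
  nlinarith [mul_nonneg (sub_nonneg.2 hγ1) (neg_le_iff_add_nonneg.1 hold),
    mul_nonneg hγ0 (obedienceLoss_nonneg hπ a (μ := μ) (ν := ν))]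

lemma designerU_robustify (hu0 : ∀ a ω, 0 ≤ u a ω) (hD : 0 < D) (hη0 : ∀ a ω, 0 ≤ η a ω)
    (hη1 : ∀ a, ∑ ω, η a ω = 1) (hν : ∀ ω, 0 < ν ω)
    (hbudget : ∀ ω, ∑ ω', |ν ω' - μ ω'| ≤ γ * D * ν ω) (hπ : IsSignalScheme π) :
    (1 - γ) * designerU u ν π ≤ designerU u ν (robustify μ ν D γ η b π) := by
  rw [← designerU_const_mul]
  exact designerU_mono hu0 (fun ω => (hν ω).le) (le_robustify hD hη0 hη1 hν hbudget hπ)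

end Construction

theorem exists_persuasive_designerU_sub_le {q ε : ℝ} (hu : ∀ a ω, u a ω ∈ Set.Icc (0 : ℝ) 1)
    (hv : ∀ a ω, v a ω ∈ Set.Icc (0 : ℝ) 1) (hD : 0 < D)
    (hη : ∀ a : A, ∃ η : Ω → ℝ, (∀ ω, 0 ≤ η ω) ∧ (∑ ω, η ω = 1) ∧
      ∀ a' : A, a' ≠ a → (∑ ω, η ω * v a' ω) + D ≤ ∑ ω, η ω * v a ω)
    (hq : 0 < q) (hν : ∀ ω, q ≤ ν ω) (hν1 : ∑ ω, ν ω = 1) (hclose : ∑ ω, |ν ω - μ ω| ≤ ε)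
    (hε : ε ≤ q * D) (hπ : IsSignalScheme π) (hpers : IsPersuasive v μ π) :
    ∃ π' : Ω → A → ℝ, IsSignalScheme π' ∧ IsPersuasive v ν π' ∧
      designerU u ν π - ε / (q * D) ≤ designerU u ν π' := by
  classical
  choose η hη0 hη1 hmargin using hη
  have hbest : ∀ ω, ∃ a, ∀ a', v a' ω ≤ v a ω := fun ω => by
    have : (univ : Finset A).Nonempty := nonempty_of_sum_ne_zero (by rw [hπ.2 ω]; exact one_ne_zero)
    obtain ⟨a, -, ha⟩ := exists_max_image univ (fun a => v a ω) this
    exact ⟨a, fun a' => ha a' (mem_univ a')⟩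
  choose b hb using hbest
  have hνpos : ∀ ω, 0 < ν ω := fun ω => hq.trans_le (hν ω)
  have hε0 : 0 ≤ ε := (sum_nonneg fun ω _ => abs_nonneg _).trans hclose
  set γ := ε / (q * D)
  have hγ0 : 0 ≤ γ := by positivity
  have hγ1 : γ ≤ 1 := (div_le_one (mul_pos hq hD)).2 hε
  have hbudget : ∀ ω, ∑ ω', |ν ω' - μ ω'| ≤ γ * D * ν ω := fun ω => by
    have hεγ : γ * D * q = ε := by simp only [γ]; field_simp
    rw [← hεγ] at hclose
    exact hclose.trans (mul_le_mul_of_nonneg_left (hν ω) (by positivity))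
  refine ⟨robustify μ ν D γ η b π, robustify_isSignalScheme hD hη0 hη1 hνpos hγ1 hbudget hπ,
    isPersuasive_robustify hv hD hη0 hη1 hmargin hb hνpos hγ0 hγ1 hbudget hπ hpers, ?_⟩
  have hgain := designerU_robustify (fun a ω => (hu a ω).1) hD hη0 hη1 hνpos hbudget hπ (b := b)
  have hU1 := designerU_le_one hu (fun ω => (hνpos ω).le) hν1 hπ
  nlinarith [mul_le_mul_of_nonneg_left hU1 hγ0]

end Robustification

theorem robustification_optimal_general
    {Ω A : Type*} [Fintype Ω] [Fintype A]
    (u v : A → Ω → ℝ) (μhat μstar : Ω → ℝ) (p0 D ε : ℝ) (πhat : Ω → A → ℝ)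
    (hu : ∀ a ω, u a ω ∈ Set.Icc (0 : ℝ) 1)
    (hv : ∀ a ω, v a ω ∈ Set.Icc (0 : ℝ) 1)
    (hμ1 : ∑ ω, μhat ω = 1)
    (hp0 : 0 < p0) (hmin : ∀ ω, p0 ≤ μhat ω)
    (hD : 0 < D)
    (hη : ∀ a : A, ∃ η : Ω → ℝ, (∀ ω, 0 ≤ η ω) ∧ (∑ ω, η ω = 1) ∧
      ∀ a' : A, a' ≠ a → (∑ ω, η ω * v a' ω) + D ≤ ∑ ω, η ω * v a ω)
    (hε : ε ≤ p0 ^ 2 * D / 2)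
    (hstar1 : ∑ ω, μstar ω = 1)
    (hclose : (∑ ω, |μstar ω - μhat ω|) ≤ ε)
    (hπhat : IsSignalScheme πhat) (hpers : IsPersuasive v μhat πhat)
    (hopt : ∀ π : Ω → A → ℝ, IsSignalScheme π → IsPersuasive v μhat π →
      designerU u μhat π ≤ designerU u μhat πhat) :
    ∃ πt : Ω → A → ℝ, IsSignalScheme πt ∧ IsPersuasive v μstar πt ∧
      ∀ π : Ω → A → ℝ, IsSignalScheme π → IsPersuasive v μstar π →
        designerU u μstar π - 14 * ε / (p0 ^ 2 * D) ≤ designerU u μstar πt := by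
  have hε0 : 0 ≤ ε := (sum_nonneg fun ω _ => abs_nonneg _).trans hclose
  rcases subsingleton_or_nontrivial A with hA | hA
  · refine ⟨πhat, hπhat, isPersuasive_of_subsingleton, fun π hπ _ => ?_⟩
    rw [designerU_eq_of_subsingleton hπ hπhat]
    exact sub_le_self _ (by positivity)
  obtain ⟨a, a', hne⟩ := exists_pair_ne A
  obtain ⟨η, hη0, hη1, hmargin⟩ := hη a
  have hD1 : D ≤ 1 := margin_le_one hv hη0 hη1 (hmargin a' hne.symm)
  have hp1 : p0 ≤ 1 := le_one_of_forall_le_of_sum_eq_one hp0.le hmin hμ1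
  have hεD : ε ≤ p0 / 2 * D := by nlinarith
  have hstar : ∀ ω, p0 / 2 ≤ μstar ω := fun ω => by
    nlinarith [sub_le_of_sum_abs_sub_le hmin hclose ω]
  have hclose' : ∑ ω, |μhat ω - μstar ω| ≤ ε := by simpa only [abs_sub_comm] using hclose
  obtain ⟨πt, hπt, hperst, hUt⟩ := exists_persuasive_designerU_sub_le hu hv hD hη
    (half_pos hp0) hstar hstar1 hclose hεD hπhat hpers
  refine ⟨πt, hπt, hperst, fun π hπ hpersπ => ?_⟩
  obtain ⟨π', hπ', hpers', hU'⟩ := exists_persuasive_designerU_sub_le hu hv hD hη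
    (half_pos hp0) (fun ω => by linarith [hmin ω]) hμ1 hclose' hεD hπ hpersπ
  have hπ_shift := (abs_le.1 (abs_designerU_sub_le hu hπ (μ := μstar) (ν := μhat))).2
  have hπhat_shift := (abs_le.1 (abs_designerU_sub_le hu hπhat (μ := μhat) (ν := μstar))).2
  have hloss := two_mul_div_add_two_mul_le hp0 hp1 hD hD1 hε0
  linarith [hopt π' hπ' hpers']

/-- Robustification, corollary of Lemma 1: robustifying the optimal
persuasive scheme for the estimate `μ̂` yields a scheme that is persuasive for the true
prior `μ*` and `14ε/(p0²D)`-optimal among all schemes persuasive for `μ*`. -/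
theorem robustification_optimal
    {Ω A : Type*} [Fintype Ω] [Fintype A]
    (u v : A → Ω → ℝ) (μhat μstar : Ω → ℝ) (p0 D ε : ℝ) (πhat : Ω → A → ℝ)
    (hu : ∀ a ω, u a ω ∈ Set.Icc (0 : ℝ) 1)
    (hv : ∀ a ω, v a ω ∈ Set.Icc (0 : ℝ) 1)
    (hμ0 : ∀ ω, 0 ≤ μhat ω) (hμ1 : ∑ ω, μhat ω = 1)
    (hp0 : 0 < p0) (hmin : ∀ ω, p0 ≤ μhat ω)
    (hD : 0 < D)
    (hη : ∀ a : A, ∃ η : Ω → ℝ, (∀ ω, 0 ≤ η ω) ∧ (∑ ω, η ω = 1) ∧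
      ∀ a' : A, a' ≠ a → (∑ ω, η ω * v a' ω) + D ≤ ∑ ω, η ω * v a ω)
    (hε0 : 0 < ε) (hε : ε ≤ p0 ^ 2 * D / 2)
    (hstar0 : ∀ ω, 0 ≤ μstar ω) (hstar1 : ∑ ω, μstar ω = 1)
    (hclose : (∑ ω, |μstar ω - μhat ω|) ≤ ε)
    (hπhat : IsSignalScheme πhat) (hpers : IsPersuasive v μhat πhat)
    (hopt : ∀ π : Ω → A → ℝ, IsSignalScheme π → IsPersuasive v μhat π →
      designerU u μhat π ≤ designerU u μhat πhat) :
    ∃ πt : Ω → A → ℝ, IsSignalScheme πt ∧ IsPersuasive v μstar πt ∧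
      ∀ π : Ω → A → ℝ, IsSignalScheme π → IsPersuasive v μstar π →
        designerU u μstar π - 14 * ε / (p0 ^ 2 * D) ≤ designerU u μstar πt :=
  robustification_optimal_general u v μhat μstar p0 D ε πhat hu hv hμ1 hp0 hmin hD hη hε hstar1
    hclose hπhat hpers hopt
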